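/- For every natural number n, the function φ_n(x) = e^{x²/2} H̃_n(x), where H̃_n is the n-th conjugate Hermite polynomial defined by H̃_n(x) = e^{−x²} (dⁿ/dxⁿ)[e^{x²}], satisfies −φ_n''(x) + x² φ_n(x) = −(2n+1) φ_n(x) for all real x. -/

import Mathlib

/-- The `n`-th conjugate Hermite polynomial
`H̃_n(x) = e^{−x²} (dⁿ/dxⁿ)[e^{x²}](x)`. -/
noncomputable def conjHermite (n : ℕ) (x : ℝ) : ℝ :=
  Real.exp (-x ^ 2) * iteratedDeriv n (fun t : ℝ => Real.exp (t ^ 2)) x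

/-- The virtual-state function `φ_n(x) = e^{x²/2} H̃_n(x)`. -/
noncomputable def virtualStateFun (n : ℕ) (x : ℝ) : ℝ :=
  Real.exp (x ^ 2 / 2) * conjHermite n x

/-! With `E(t) = e^{t²}` one has `φₙ = e^{-x²/2} E⁽ⁿ⁾`. Since `E' = 2tE`, Leibniz's rule gives the
recurrence `E⁽ⁿ⁺²⁾ = 2x E⁽ⁿ⁺¹⁾ + 2(n+1) E⁽ⁿ⁾`, while differentiating the Gaussian factor twice gives
`φₙ'' = e^{-x²/2} (E⁽ⁿ⁺²⁾ - 2x E⁽ⁿ⁺¹⁾ + (x² - 1) E⁽ⁿ⁾) = (x² + 2n + 1) φₙ`. -/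

open Real

theorem iteratedDeriv_iteratedDeriv {𝕜 F : Type*} [NontriviallyNormedField 𝕜]
    [NormedAddCommGroup F] [NormedSpace 𝕜 F] (m n : ℕ) (f : 𝕜 → F) :
    iteratedDeriv m (iteratedDeriv n f) = iteratedDeriv (m + n) f := by
  simp only [iteratedDeriv_eq_iterate, Function.iterate_add]
  rfl

theorem iteratedDeriv_succ_id_mul {𝕜 : Type*} [NontriviallyNormedField 𝕜] {f : 𝕜 → 𝕜}
    {n : ℕ} {x : 𝕜} (hf : ContDiffAt 𝕜 (n + 1) f x) :
    iteratedDeriv (n + 1) (fun t => t * f t) x =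
      x * iteratedDeriv (n + 1) f x + (n + 1) * iteratedDeriv n f x := by
  rw [iteratedDeriv_fun_mul (f := fun t => t) contDiffAt_id hf, Finset.sum_range_succ',
    Finset.sum_range_succ']
  simp [iteratedDeriv_fun_id, add_comm]

theorem deriv_exp_sq : deriv (fun t : ℝ => exp (t ^ 2)) = fun t => 2 * (t * exp (t ^ 2)) := by
  funext t
  rw [((hasDerivAt_pow 2 t).exp).deriv]
  ring

theorem iteratedDeriv_exp_sq_add_two (n : ℕ) (x : ℝ) :
    iteratedDeriv (n + 2) (fun t : ℝ => exp (t ^ 2)) x =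
      2 * x * iteratedDeriv (n + 1) (fun t : ℝ => exp (t ^ 2)) x +
        2 * (n + 1) * iteratedDeriv n (fun t : ℝ => exp (t ^ 2)) x := by
  have hsmooth : ContDiffAt ℝ (n + 1) (fun t : ℝ => exp (t ^ 2)) x := by fun_prop
  rw [iteratedDeriv_succ', deriv_exp_sq, iteratedDeriv_const_mul_field,
    iteratedDeriv_succ_id_mul hsmooth]
  ring

theorem hasDerivAt_exp_neg_sq_half_mul {g : ℝ → ℝ} {g' x : ℝ} (hg : HasDerivAt g g' x) :
    HasDerivAt (fun t => exp (-(t ^ 2 / 2)) * g t) (exp (-(x ^ 2 / 2)) * (g' - x * g x)) x := by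
  have he : HasDerivAt (fun t : ℝ => exp (-(t ^ 2 / 2))) (exp (-(x ^ 2 / 2)) * -x) x := by
    simpa using ((hasDerivAt_pow 2 x).div_const 2).neg.exp
  exact (he.fun_mul hg).congr_deriv (by ring)

theorem iteratedDeriv_two_exp_neg_sq_half_mul {g : ℝ → ℝ} (hg : ContDiff ℝ 2 g) (x : ℝ) :
    iteratedDeriv 2 (fun t => exp (-(t ^ 2 / 2)) * g t) x =
      exp (-(x ^ 2 / 2)) * (iteratedDeriv 2 g x - 2 * x * deriv g x + (x ^ 2 - 1) * g x) := by
  have hg₁ : Differentiable ℝ g := hg.differentiable (by norm_num)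
  have hg₂ : Differentiable ℝ (deriv g) := (hg.deriv' (n := 1)).differentiable (by norm_num)
  have hderiv : deriv (fun t => exp (-(t ^ 2 / 2)) * g t) =
      fun t => exp (-(t ^ 2 / 2)) * (deriv g t - t * g t) :=
    funext fun t => (hasDerivAt_exp_neg_sq_half_mul (hg₁ t).hasDerivAt).deriv
  have hsecond := hasDerivAt_exp_neg_sq_half_mul
    ((hg₂ x).hasDerivAt.fun_sub ((hasDerivAt_id' x).fun_mul (hg₁ x).hasDerivAt))
  rw [iteratedDeriv_succ, iteratedDeriv_one, hderiv, iteratedDeriv_succ, iteratedDeriv_one,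
    hsecond.deriv]
  ring

theorem virtualStateFun_eq_exp_mul_iteratedDeriv (n : ℕ) :
    virtualStateFun n =
      fun t => exp (-(t ^ 2 / 2)) * iteratedDeriv n (fun t : ℝ => exp (t ^ 2)) t := by
  funext t
  rw [virtualStateFun, conjHermite, ← mul_assoc, ← exp_add]
  congr 2
  ring

theorem conj_hermite_oscillator_equation (n : ℕ) (x : ℝ) :
    -iteratedDeriv 2 (virtualStateFun n) x + x ^ 2 * virtualStateFun n x =
      -(2 * (n : ℝ) + 1) * virtualStateFun n x := by
  have hsmooth : ContDiff ℝ 2 (iteratedDeriv n (fun t : ℝ => exp (t ^ 2))) := by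
    rw [iteratedDeriv_eq_iterate]; fun_prop
  rw [virtualStateFun_eq_exp_mul_iteratedDeriv, iteratedDeriv_two_exp_neg_sq_half_mul hsmooth,
    iteratedDeriv_iteratedDeriv, ← iteratedDeriv_succ, add_comm 2, iteratedDeriv_exp_sq_add_two]
  ring
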